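/- In the grid-shaped turn-based game structure over a tile system (T, H, V) — in which the 'choice' states are the only states controlled by Player 1 among those where Player 1's move matters, and each choice state has one transition to every tile state — the memoryless strategies of Player 1 are in one-to-one correspondence with the assignments of a tile of T to each cell of the grid, i.e., with the maps τ : ℕ×ℕ → T; moreover such a strategy makes the horizontal-constraint formula ⟨1⟩G[ (v₁ ⇒ ⋁_{(t₁,t₂)∈H} ⟨2⟩XX t₁ ∧ ⟨2⟩X(v₂ ∧ XX t₂)) ∧ (v₂ ⇒ ⋁_{(t₁,t₂)∈H} ⟨2⟩XX t₁ ∧ ⟨2⟩X(v₁ ∧ XX t₂)) ] together with its vertical counterpart hold if and only if the corresponding map τ satisfies (τ(i,j), τ(i+1,j)) ∈ H and (τ(i,j), τ(i,j+1)) ∈ V for all i,j. -/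

import Mathlib

/-!
# ATL with strategy contexts and memoryless strategies (ATL_sc^0)

Players and atomic propositions are coded as natural numbers.
-/

/-- A concurrent game structure: states labelled with atomic propositions (coded as
naturals), players coded as naturals, and a transition function assigning to each state
and each tuple of moves (one move per player) a successor state. -/
structure CGS : Type 1 where
  State : Type
  Move : Type
  move_nonempty : Nonempty Move
  label : State → ℕ → Prop
  trans : State → (ℕ → Move) → State

/-- Player `p` controls state `s`: the successor from `s` only depends on `p`'s move. -/
def Controls (G : CGS) (p : ℕ) (s : G.State) : Prop :=
  ∀ mv mv' : ℕ → G.Move, mv p = mv' p → G.trans s mv = G.trans s mv'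

/-- A game structure is turn-based if every state is controlled by a single player. -/
def TurnBased (G : CGS) : Prop := ∀ s : G.State, ∃ p : ℕ, Controls G p s

/-- A (memoryless) strategy context: a partial assignment of memoryless strategies
(functions from states to moves) to players. -/
def Ctx (G : CGS) : Type := ℕ → Option (G.State → G.Move)

/-- The empty strategy context. -/
def emptyCtx (G : CGS) : Ctx G := fun _ => none

/-- `π` is an outcome from state `s` compatible with the memoryless context `ctx`:
at each step, every player to whom `ctx` assigns a strategy plays according to it. -/
def IsOutcome (G : CGS) (ctx : Ctx G) (s : G.State) (π : ℕ → G.State) : Prop :=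
  π 0 = s ∧ ∀ i : ℕ, ∃ mv : ℕ → G.Move,
    (∀ p σ, ctx p = some σ → mv p = σ (π i)) ∧ π (i + 1) = G.trans (π i) mv

/-- Formulas of ATL_sc^0 (with LTL path modalities `X` and `U`); coalitions are
finite lists of players. -/
inductive Formula : Type where
  | atom : ℕ → Formula
  | neg : Formula → Formula
  | conj : Formula → Formula → Formula
  | next : Formula → Formula
  | untl : Formula → Formula → Formula
  | strat : List ℕ → Formula → Formula

/-- Satisfaction of a formula on a path, under a memoryless strategy context.
`strat A φ` (the quantifier `⟨A⟩φ`) assigns new memoryless strategies to the players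
of `A`, keeps the strategies of the other players from the current context, and
requires `φ` on all outcomes compatible with the resulting context. -/
def sat (G : CGS) : Formula → Ctx G → (ℕ → G.State) → Prop
  | .atom p, _, π => G.label (π 0) p
  | .neg φ, ctx, π => ¬ sat G φ ctx π
  | .conj φ ψ, ctx, π => sat G φ ctx π ∧ sat G ψ ctx π
  | .next φ, ctx, π => sat G φ ctx (fun n => π (n + 1))
  | .untl φ ψ, ctx, π => ∃ j : ℕ, sat G ψ ctx (fun n => π (n + j)) ∧
      ∀ k < j, sat G φ ctx (fun n => π (n + k))
  | .strat A φ, ctx, π => ∃ ctx' : Ctx G,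
      (∀ p, p ∉ A → ctx' p = ctx p) ∧
      (∀ p, p ∈ A → ∃ σ, ctx' p = some σ) ∧
      ∀ π' : ℕ → G.State, IsOutcome G ctx' (π 0) π' → sat G φ ctx' π'

/-- A state satisfies a formula (under a given context) if the formula holds on all
outcomes from that state compatible with the context. -/
def StateSatCtx (G : CGS) (ctx : Ctx G) (s : G.State) (φ : Formula) : Prop :=
  ∀ π : ℕ → G.State, IsOutcome G ctx s π → sat G φ ctx π

/-- A state satisfies a formula under the empty strategy context. -/
def StateSat (G : CGS) (s : G.State) (φ : Formula) : Prop :=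
  StateSatCtx G (emptyCtx G) s φ

/-- Satisfiability of an ATL_sc^0 formula in a turn-based game structure. -/
def SatTB (φ : Formula) : Prop :=
  ∃ G : CGS, TurnBased G ∧ ∃ s : G.State, StateSat G s φ

/-- An explicit injective encoding of formulas as natural numbers. -/
def encodeF : Formula → ℕ
  | .atom n => Nat.pair 0 n
  | .neg φ => Nat.pair 1 (encodeF φ)
  | .conj φ ψ => Nat.pair 2 (Nat.pair (encodeF φ) (encodeF ψ))
  | .next φ => Nat.pair 3 (encodeF φ)
  | .untl φ ψ => Nat.pair 4 (Nat.pair (encodeF φ) (encodeF ψ))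
  | .strat A φ => Nat.pair 5 (Nat.pair (Encodable.encode A) (encodeF φ))



namespace Formula

/-- Disjunction. -/
def fOr (φ ψ : Formula) : Formula := neg (conj (neg φ) (neg ψ))
/-- Implication. -/
def fImp (φ ψ : Formula) : Formula := fOr (neg φ) ψ
/-- Bi-implication. -/
def fIff (φ ψ : Formula) : Formula := conj (fImp φ ψ) (fImp ψ φ)
/-- True. -/
def top : Formula := fOr (atom 0) (neg (atom 0))
/-- False. -/
def bot : Formula := neg top
/-- Eventually (`F`). -/
def fut (φ : Formula) : Formula := untl top φ
/-- Globally (`G`). -/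
def glob (φ : Formula) : Formula := neg (fut (neg φ))
/-- Weak until (`W`): `G φ ∨ φ U ψ`. -/
def wuntl (φ ψ : Formula) : Formula := fOr (glob φ) (untl φ ψ)
/-- Finite disjunction. -/
def bigOr (l : List Formula) : Formula := l.foldr fOr bot
/-- Finite conjunction. -/
def bigAnd (l : List Formula) : Formula := l.foldr conj top
/-- Universal path quantification `A`, encoded as `⟨∅⟩`. -/
def Aq (φ : Formula) : Formula := strat [] φ
/-- Existential path quantification `E`. -/
def Eq (φ : Formula) : Formula := neg (Aq (neg φ))
/-- The strategy quantifier `⟨p⟩` for a single player `p`. -/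
def D (p : ℕ) (φ : Formula) : Formula := strat [p] φ
/-- The dual quantifier `[p]` over memoryless strategies of player `p`. -/
def B (p : ℕ) (φ : Formula) : Formula := neg (D p (neg φ))
/-- Two nested next modalities. -/
def X2 (φ : Formula) : Formula := next (next φ)
/-- Three nested next modalities. -/
def X3 (φ : Formula) : Formula := next (X2 φ)
/-- Four nested next modalities. -/
def X4 (φ : Formula) : Formula := next (X3 φ)

end Formula

open Formula

/-! Coding of the atomic propositions `{m, c, v₁, v₂, α, β, □, ○} ∪ T`:
`m ↦ 0`, `c ↦ 1`, `v₁ ↦ 2`, `v₂ ↦ 3`, `α ↦ 4`, `β ↦ 5`, `□ ↦ 6`, `○ ↦ 7`,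
and tile `t ↦ 8 + t`. -/

def pm : Formula := Formula.atom 0
def pc : Formula := Formula.atom 1
def pv1 : Formula := Formula.atom 2
def pv2 : Formula := Formula.atom 3
def pal : Formula := Formula.atom 4
def pbe : Formula := Formula.atom 5
def psq : Formula := Formula.atom 6
def pci : Formula := Formula.atom 7
def ptile (t : ℕ) : Formula := Formula.atom (8 + t)

/-- A tile system: tiles are `0, …, numTiles - 1`, with horizontal and vertical
matching relations given as finite lists of pairs. -/
structure TileSystem : Type where
  numTiles : ℕ
  H : List (ℕ × ℕ)
  V : List (ℕ × ℕ)

/-- The tile system admits a tiling of the quadrant ℕ×ℕ. -/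
def TilesQuadrant (ts : TileSystem) : Prop :=
  ∃ τ : ℕ → ℕ → ℕ, (∀ i j, τ i j < ts.numTiles) ∧
    (∀ i j, (τ i j, τ (i + 1) j) ∈ ts.H) ∧
    (∀ i j, (τ i j, τ i (j + 1)) ∈ ts.V)

/-- An explicit encoding of tile systems as natural numbers. -/
def encodeTS (ts : TileSystem) : ℕ := Encodable.encode (ts.numTiles, ts.H, ts.V)

/-- The list of tiles of a tile system. -/
def tilesOf (ts : TileSystem) : List ℕ := List.range ts.numTiles

/-- The atomic propositions `AP' = {m, c} ∪ T`. -/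
def APprime (ts : TileSystem) : List ℕ := 0 :: 1 :: (tilesOf ts).map (fun t => 8 + t)

/-- The atomic propositions `AP = AP' ∪ {v₁, v₂, α, β, □, ○}`. -/
def APall (ts : TileSystem) : List ℕ := APprime ts ++ [2, 3, 4, 5, 6, 7]

/-- Formula (1): labelling discipline (each state has exactly one proposition of `AP'`),
`A(m W c)`, the shape of choice and tile states, and turn-basedness via
`□ ⇔ ¬○` and `EX p ⇔ ⟨i⟩X p`. -/
def phi1 (ts : TileSystem) : Formula :=
  bigAnd [
    Aq (glob (bigOr ((APprime ts).map fun p =>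
      conj (atom p) (bigAnd (((APprime ts).filter (· ≠ p)).map fun q => neg (atom q)))))),
    Aq (wuntl pm pc),
    Aq (glob (fImp pc (bigAnd [psq,
      bigAnd ((tilesOf ts).map fun t => D 1 (next (ptile t))),
      Aq (next (bigOr ((tilesOf ts).map fun t => Aq (glob (ptile t)))))]))),
    Aq (glob (bigAnd [
      fIff psq (neg pci),
      fImp psq (bigAnd ((APall ts).map fun p =>
        fIff (Eq (next (atom p))) (D 1 (next (atom p))))),
      fImp pci (bigAnd ((APall ts).map fun p =>
        fIff (Eq (next (atom p))) (D 2 (next (atom p)))))]))]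

/-- Formula (2): the four-state cell gadgets: entry `□`-states labelled `m` and
exactly one of `v₁, v₂`, middle `○`-states coloured `α` or `β` by Player 1,
exit `○`-states with neither colour. -/
def phi2 (_ts : TileSystem) : Formula :=
  bigAnd [
    Aq (glob (fImp pm (fOr (bigAnd [psq, neg pal, neg pbe])
      (conj pci (neg (conj pal pbe)))))),
    Aq (glob (conj (fImp (conj pm psq) (fIff pv1 (neg pv2)))
      (fImp (fOr pv1 pv2) (conj pm psq)))),
    Aq (glob (fImp (conj pm psq) (bigAnd [
      Aq (next (bigAnd [pm, pci, fOr pal pbe,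
        Aq (next (bigAnd [pm, pci, neg pal, neg pbe]))])),
      D 1 (next pal),
      D 1 (next pbe)])))]

/-- Formula (3): constraints on transitions leaving a cell. -/
def phi3 (_ts : TileSystem) : Formula :=
  bigAnd [
    Aq (glob (fImp (bigOr [Eq (next pc), Eq (next pv1), Eq (next pv2)])
      (bigAnd [pm, pci, neg pal, neg pbe]))),
    Aq (glob (fImp (bigAnd [pm, pci, neg pal, neg pbe])
      (bigAnd [Eq (next pc), Eq (next pv1), Eq (next pv2),
        Aq (next (bigOr [pc, pv1, pv2]))])))]

/-- Formula (4): the tiling constraints, under a memoryless strategy of Player 1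
choosing a tile for each cell (distances adapted to the four-state cell gadget). -/
def phi4 (ts : TileSystem) : Formula :=
  D 1 (glob (bigAnd [
    fImp pv1 (bigOr (ts.H.map fun p =>
      conj (D 2 (X4 (ptile p.1))) (D 2 (X3 (conj pv2 (X4 (ptile p.2))))))),
    fImp pv2 (bigOr (ts.H.map fun p =>
      conj (D 2 (X4 (ptile p.1))) (D 2 (X3 (conj pv1 (X4 (ptile p.2))))))),
    fImp pv1 (bigOr (ts.V.map fun p =>
      conj (D 2 (X4 (ptile p.1))) (D 2 (X3 (conj pv1 (X4 (ptile p.2))))))),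
    fImp pv2 (bigOr (ts.V.map fun p =>
      conj (D 2 (X4 (ptile p.1))) (D 2 (X3 (conj pv2 (X4 (ptile p.2)))))))]))

/-- Formula (5): `AG[(m ∧ □) ⇒ [2](⟨∅⟩X³(c ∨ v₁) ∨ ⟨∅⟩X³(c ∨ v₂))]`,
forcing each cell to have a single exit state. -/
def phi5 : Formula :=
  Aq (glob (fImp (conj pm psq)
    (B 2 (fOr (Aq (X3 (fOr pc pv1))) (Aq (X3 (fOr pc pv2)))))))

/-- Formula (6): `AG[(m ∧ □) ⇒ [1]((⟨2⟩X³(v₁ ∧ Xα) ∧ ⟨2⟩X³(v₂ ∧ Xα)) ⇒ [2]⟨∅⟩X³Xα)]`,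
forcing each cell to have exactly two successor cells. -/
def phi6 : Formula :=
  Aq (glob (fImp (conj pm psq)
    (B 1 (fImp (conj (D 2 (X3 (conj pv1 (next pal)))) (D 2 (X3 (conj pv2 (next pal)))))
      (B 2 (Aq (X3 (next pal))))))))

/-- Formula (7): `[1]⟨∅⟩G[(m ∧ □ ∧ v₁) ⇒ ((⟨2⟩X³(v₁ ∧ [2]X³Xα)) ⇒
(⟨2⟩X³(¬v₁ ∧ X³(¬v₁ ∧ Xα))))]` together with its `v₂`-counterpart, forcing the two
successor cells of every cell to share a common successor cell. -/
def phi7 : Formula :=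
  conj
    (B 1 (Aq (glob (fImp (bigAnd [pm, psq, pv1])
      (fImp (D 2 (X3 (conj pv1 (B 2 (X3 (next pal))))))
        (D 2 (X3 (conj (neg pv1) (X3 (conj (neg pv1) (next pal)))))))))))
    (B 1 (Aq (glob (fImp (bigAnd [pm, psq, pv2])
      (fImp (D 2 (X3 (conj pv2 (B 2 (X3 (next pal))))))
        (D 2 (X3 (conj (neg pv2) (X3 (conj (neg pv2) (next pal)))))))))))

/-- The reduction formula `Φ_{T,H,V}`: the conjunction of formulas (1)–(7), together
with the requirement that the initial state be a square state of a cell of the main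
part. -/
def Phi (ts : TileSystem) : Formula :=
  bigAnd [conj pm psq, phi1 ts, phi2 ts, phi3 ts, phi4 ts, phi5, phi6, phi7]

/-- The atomic propositions occurring in a formula. -/
def atomsOf : Formula → List ℕ
  | .atom n => [n]
  | .neg φ => atomsOf φ
  | .conj φ ψ => atomsOf φ ++ atomsOf ψ
  | .next φ => atomsOf φ
  | .untl φ ψ => atomsOf φ ++ atomsOf ψ
  | .strat _ φ => atomsOf φ

/-- The players occurring (in coalitions) in a formula. -/
def playersOf : Formula → List ℕ
  | .atom _ => []
  | .neg φ => playersOf φ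
  | .conj φ ψ => playersOf φ ++ playersOf ψ
  | .next φ => playersOf φ
  | .untl φ ψ => playersOf φ ++ playersOf ψ
  | .strat A φ => A ++ playersOf φ


/-! ## The simple grid-shaped game structure (one main state per cell) -/

/-- States of the simple grid game: one main state and one choice state per cell of
the quadrant, plus one tile state per tile. -/
inductive SState : Type where
  | main (i j : ℕ)
  | choice (i j : ℕ)
  | tile (t : ℕ)

/-- Labelling: main states carry `m`, `○` and `v₁`/`v₂` alternating along horizontal
lines; choice states carry `c` and `□`; tile states carry their tile and `○`. -/
def sLabel : SState → ℕ → Prop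
  | .main i _, p => p = 0 ∨ p = 7 ∨ (p = 2 ∧ i % 2 = 0) ∨ (p = 3 ∧ i % 2 = 1)
  | .choice _ _, p => p = 1 ∨ p = 6
  | .tile t, p => p = 8 + t ∨ p = 7

/-- Transitions: at a main state, Player 2 moves to the right neighbour, the top
neighbour, or the associated choice state; at a choice state, Player 1 picks a tile
state; tile states loop on themselves. -/
def sTrans (n : ℕ) : SState → (ℕ → ℕ) → SState
  | .main i j, mv =>
      if mv 2 % 3 = 0 then .main (i + 1) j
      else if mv 2 % 3 = 1 then .main i (j + 1)
      else .choice i j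
  | .choice _ _, mv => .tile (mv 1 % max 1 n)
  | .tile t, _ => .tile t

/-- The simple grid-shaped turn-based game structure over a tile system. -/
def SimpleGrid (ts : TileSystem) : CGS where
  State := SState
  Move := ℕ
  move_nonempty := ⟨0⟩
  label := sLabel
  trans := sTrans ts.numTiles

/-- The tile assignment `τ : ℕ×ℕ → T` induced by a memoryless strategy of Player 1:
the tile chosen at the choice state of each cell. -/
def toTau (ts : TileSystem) (σ : SState → ℕ) : ℕ → ℕ → ℕ :=
  fun i j => σ (SState.choice i j) % max 1 ts.numTiles

/-- The strategy context in which Player 1 follows the memoryless strategy `σ` and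
no other player is assigned a strategy. -/
def ctx1 (ts : TileSystem) (σ : SState → ℕ) : Ctx (SimpleGrid ts) :=
  fun p => if p = 1 then some σ else none

open Formula in
/-- The horizontal-constraint formula
`G[(v₁ ⇒ ⋁_{(t₁,t₂)∈H} ⟨2⟩XX t₁ ∧ ⟨2⟩X(v₂ ∧ XX t₂)) ∧ (v₂ ⇒ …)]`
together with its vertical counterpart (its body; it is to be evaluated in the
context of a memoryless strategy of Player 1, i.e. under the quantifier `⟨1⟩`). -/
def HVbody (ts : TileSystem) : Formula :=
  glob (bigAnd [
    fImp pv1 (bigOr (ts.H.map fun p =>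
      conj (D 2 (X2 (ptile p.1))) (D 2 (next (conj pv2 (X2 (ptile p.2))))))),
    fImp pv2 (bigOr (ts.H.map fun p =>
      conj (D 2 (X2 (ptile p.1))) (D 2 (next (conj pv1 (X2 (ptile p.2))))))),
    fImp pv1 (bigOr (ts.V.map fun p =>
      conj (D 2 (X2 (ptile p.1))) (D 2 (next (conj pv1 (X2 (ptile p.2))))))),
    fImp pv2 (bigOr (ts.V.map fun p =>
      conj (D 2 (X2 (ptile p.1))) (D 2 (next (conj pv2 (X2 (ptile p.2)))))))])


/-!
Once Player 1's memoryless strategy `σ` is fixed, the only remaining player whose move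
matters is Player 2, so the outcome of `⟨2⟩` is the unique play of a pair of memoryless
strategies. From a main state `(i, j)`, Player 2 can reach a tile state in two steps only
through the choice state of `(i, j)`, whose tile is `τ_σ(i, j)`, and in three steps only
through the choice state of a right or top neighbour. Hence `⟨2⟩XX t` holds at `(i, j)` iff
`t = τ_σ(i, j)`, and `⟨2⟩X(v ∧ XX t)` iff `t` is the tile of a neighbour carrying `v`; since
`v₁`/`v₂` alternate horizontally, the right neighbour carries the opposite letter and the top
neighbour the same one, which singles out the `H`- and the `V`-constraint.
-/

section Sat

open Formula

variable {G : CGS} {ctx : Ctx G} {π : ℕ → G.State}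

theorem sat_top : sat G top ctx π := by
  simp only [top, fOr, sat]
  tauto

theorem sat_bot : ¬ sat G bot ctx π := fun h => h sat_top

theorem sat_conj {φ ψ : Formula} : sat G (conj φ ψ) ctx π ↔ sat G φ ctx π ∧ sat G ψ ctx π :=
  Iff.rfl

theorem sat_fOr {φ ψ : Formula} : sat G (fOr φ ψ) ctx π ↔ sat G φ ctx π ∨ sat G ψ ctx π := by
  simp only [fOr, sat]
  tauto

theorem sat_fImp {φ ψ : Formula} : sat G (fImp φ ψ) ctx π ↔ (sat G φ ctx π → sat G ψ ctx π) := by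
  simp only [fImp, sat_fOr, sat]
  tauto

theorem sat_glob {φ : Formula} : sat G (glob φ) ctx π ↔ ∀ k, sat G φ ctx (fun n => π (n + k)) := by
  simp only [glob, fut, sat, not_exists, not_and]
  exact ⟨fun h k => by_contra fun hk => h k hk fun _ _ => sat_top, fun h k hk => absurd (h k) hk⟩

theorem sat_bigOr {l : List Formula} : sat G (bigOr l) ctx π ↔ ∃ φ ∈ l, sat G φ ctx π := by
  induction l with
  | nil => simpa [bigOr] using sat_bot
  | cons φ l ih => simp [bigOr, sat_fOr, ← ih]

theorem sat_bigAnd {l : List Formula} : sat G (bigAnd l) ctx π ↔ ∀ φ ∈ l, sat G φ ctx π := by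
  induction l with
  | nil => simpa [bigAnd] using sat_top
  | cons φ l ih => simp [bigAnd, sat, ← ih]

end Sat

open Formula in
def matchFormula (R : List (ℕ × ℕ)) (v : Formula) : Formula :=
  bigOr (R.map fun p => conj (D 2 (X2 (ptile p.1))) (D 2 (next (conj v (X2 (ptile p.2))))))

open Formula in
def hvClauses (ts : TileSystem) : Formula :=
  bigAnd [fImp pv1 (matchFormula ts.H pv2), fImp pv2 (matchFormula ts.H pv1),
    fImp pv1 (matchFormula ts.V pv1), fImp pv2 (matchFormula ts.V pv2)]

theorem HVbody_eq_glob_hvClauses (ts : TileSystem) : HVbody ts = Formula.glob (hvClauses ts) :=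
  rfl

section TileAssignment

variable {ts : TileSystem}

theorem exists_toTau_eq {τ : ℕ → ℕ → ℕ} (hτ : ∀ i j, τ i j < ts.numTiles) :
    ∃ σ : SState → ℕ, toTau ts σ = τ :=
  ⟨fun | .choice i j => τ i j | _ => 0,
    funext₂ fun i j => Nat.mod_eq_of_lt (lt_max_of_lt_right (hτ i j))⟩

theorem toTau_lt (hn : 0 < ts.numTiles) (σ : SState → ℕ) (i j : ℕ) :
    toTau ts σ i j < ts.numTiles := by
  simpa [toTau, max_eq_right (Nat.one_le_of_lt hn)] using Nat.mod_lt (σ (.choice i j)) hn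

theorem toTau_eq_toTau_iff {σ σ' : SState → ℕ} :
    toTau ts σ = toTau ts σ' ↔ ∀ i j : ℕ,
      (SimpleGrid ts).trans (.choice i j) (fun _ => σ (.choice i j)) =
        (SimpleGrid ts).trans (.choice i j) (fun _ => σ' (.choice i j)) := by
  change _ ↔ ∀ i j, SState.tile (toTau ts σ i j) = .tile (toTau ts σ' i j)
  simp only [funext_iff, SState.tile.injEq]

end TileAssignment

section Run

variable {G : CGS}

def run (G : CGS) (mv : G.State → ℕ → G.Move) (s : G.State) : ℕ → G.State
  | 0 => s
  | k + 1 => G.trans (run G mv s k) (mv (run G mv s k))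

theorem run_succ_eq_run_trans (mv : G.State → ℕ → G.Move) (s : G.State) (k : ℕ) :
    run G mv s (k + 1) = run G mv (G.trans s (mv s)) k := by
  induction k with
  | zero => rfl
  | succ k ih => rw [run, ih, run]

variable {ctx : Ctx G} {mv : G.State → ℕ → G.Move}

theorem isOutcome_run (hmv : ∀ p σ, ctx p = some σ → ∀ x, mv x p = σ x) (s : G.State) :
    IsOutcome G ctx s (run G mv s) :=
  ⟨rfl, fun k => ⟨mv (run G mv s k), fun p σ hp => hmv p σ hp _, rfl⟩⟩

theorem IsOutcome.eq_run (hmv : ∀ p σ, ctx p = some σ → ∀ x, mv x p = σ x)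
    (hctrl : ∀ x, ∃ p σ, Controls G p x ∧ ctx p = some σ) {s : G.State} {π : ℕ → G.State}
    (hπ : IsOutcome G ctx s π) : π = run G mv s := by
  funext k
  induction k with
  | zero => exact hπ.1
  | succ k ih =>
    obtain ⟨m, hm, hstep⟩ := hπ.2 k
    obtain ⟨p, σ, hp, hσ⟩ := hctrl (π k)
    rw [hstep, hp m (mv (π k)) (by rw [hm p σ hσ, hmv p σ hσ]), ih]
    rfl

end Run

namespace SimpleGrid

open Formula

variable {ts : TileSystem}

theorem controls_one_or_two (x : SState) :
    Controls (SimpleGrid ts) 1 x ∨ Controls (SimpleGrid ts) 2 x := by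
  cases x with
  | main => exact .inr fun m m' h => by simp only [SimpleGrid, sTrans, h]
  | choice => exact .inl fun m m' h => by simp only [SimpleGrid, sTrans, h]
  | tile => exact .inl fun _ _ _ => rfl

/-- All players but 2 share `σ`; among them only Player 1's move ever matters in `SimpleGrid`. -/
def profile (σ σ₂ : SState → ℕ) : SState → ℕ → ℕ := fun x p => if p = 2 then σ₂ x else σ x

def ctx2 (ts : TileSystem) (σ σ₂ : SState → ℕ) : Ctx (SimpleGrid ts) :=
  fun p => if p = 1 then some σ else if p = 2 then some σ₂ else none

def play (ts : TileSystem) (σ σ₂ : SState → ℕ) : SState → ℕ → SState :=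
  run (SimpleGrid ts) (profile σ σ₂)

variable {σ σ₂ : SState → ℕ}

theorem isOutcome_ctx1_play (s : SState) :
    IsOutcome (SimpleGrid ts) (ctx1 ts σ) s (play ts σ σ₂ s) := by
  refine isOutcome_run (G := SimpleGrid ts) (mv := profile σ σ₂) (fun p f hp x => ?_) s
  unfold ctx1 at hp
  split_ifs at hp with h
  cases hp
  subst h
  rfl

theorem isOutcome_ctx2_iff {s : SState} {π : ℕ → (SimpleGrid ts).State} :
    IsOutcome (SimpleGrid ts) (ctx2 ts σ σ₂) s π ↔ π = play ts σ σ₂ s := by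
  have hmv : ∀ p f, ctx2 ts σ σ₂ p = some f → ∀ x, profile σ σ₂ x p = f x := by
    intro p f hp x
    simp only [ctx2] at hp
    split_ifs at hp with h1 h2 <;> cases hp <;> simp_all [profile]
  refine ⟨IsOutcome.eq_run hmv fun x => ?_, fun h => h ▸ isOutcome_run hmv s⟩
  rcases controls_one_or_two x with h | h
  · exact ⟨1, σ, h, rfl⟩
  · exact ⟨2, σ₂, h, rfl⟩

theorem sat_D_two_iff {φ : Formula} {π : ℕ → (SimpleGrid ts).State} :
    sat (SimpleGrid ts) (D 2 φ) (ctx1 ts σ) π ↔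
      ∃ σ₂, sat (SimpleGrid ts) φ (ctx2 ts σ σ₂) (play ts σ σ₂ (π 0)) := by
  have hctx2 : ∀ σ₂ p, p ∉ [2] → ctx2 ts σ σ₂ p = ctx1 ts σ p := by
    intro σ₂ p hp
    by_cases h : p = 1 <;> simp_all [ctx2, ctx1]
  constructor
  · rintro ⟨ctx', hA, hB, hC⟩
    obtain ⟨σ₂, h2⟩ := hB 2 (List.mem_singleton_self 2)
    have hctx' : ctx' = ctx2 ts σ σ₂ := by
      funext p
      by_cases hp : p = 2
      · subst hp; simpa [ctx2] using h2
      · rw [hA p (by simpa using hp), hctx2 σ₂ p (by simpa using hp)]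
    subst hctx'
    exact ⟨σ₂, hC _ (isOutcome_ctx2_iff.2 rfl)⟩
  · rintro ⟨σ₂, h⟩
    refine ⟨ctx2 ts σ σ₂, hctx2 σ₂, fun p hp => ⟨σ₂, ?_⟩, fun π' hπ' => ?_⟩
    · simp_all [ctx2]
    · rwa [isOutcome_ctx2_iff.1 hπ']

theorem play_succ (s : SState) (k : ℕ) :
    play ts σ σ₂ s (k + 1) = play ts σ σ₂ (play ts σ σ₂ s 1) k :=
  run_succ_eq_run_trans _ _ _

theorem play_main_one (i j : ℕ) :
    play ts σ σ₂ (.main i j) 1 = .main (i + 1) j ∨ play ts σ σ₂ (.main i j) 1 = .main i (j + 1) ∨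
      play ts σ σ₂ (.main i j) 1 = .choice i j := by
  simp only [play, run, SimpleGrid, sTrans]
  split_ifs <;> simp

theorem play_choice_one (i j : ℕ) : play ts σ σ₂ (.choice i j) 1 = .tile (toTau ts σ i j) := rfl

theorem play_main_one_ne_tile (i j t : ℕ) : play ts σ σ₂ (.main i j) 1 ≠ .tile t := by
  rcases play_main_one (ts := ts) (σ := σ) (σ₂ := σ₂) i j with h | h | h <;> simp [h]

theorem eq_toTau_of_play_two_eq_tile {i j t : ℕ} (h : play ts σ σ₂ (.main i j) 2 = .tile t) :
    t = toTau ts σ i j := by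
  rw [play_succ] at h
  rcases play_main_one (ts := ts) (σ := σ) (σ₂ := σ₂) i j with h1 | h1 | h1 <;> rw [h1] at h
  · exact absurd h (play_main_one_ne_tile _ _ _)
  · exact absurd h (play_main_one_ne_tile _ _ _)
  · rw [play_choice_one] at h
    exact (SState.tile.inj h).symm

theorem exists_play_two_eq_tile_iff {i j t : ℕ} :
    (∃ σ₂, play ts σ σ₂ (.main i j) 2 = .tile t) ↔ t = toTau ts σ i j := by
  refine ⟨fun ⟨_, h⟩ => eq_toTau_of_play_two_eq_tile h, ?_⟩
  rintro rfl
  exact ⟨fun _ => 2, rfl⟩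

/-- Move `d = 0` goes right and `d = 1` up from cell `(i, j)`; move `2` enters a choice state. -/
def moveThenChoose (i j d : ℕ) : SState → ℕ
  | .main i' j' => if i' = i ∧ j' = j then d else 2
  | _ => 2

theorem exists_play_three_eq_tile_iff {P : SState → Prop} {i j t : ℕ}
    (hP : ¬ P (.choice i j)) :
    (∃ σ₂, P (play ts σ σ₂ (.main i j) 1) ∧ play ts σ σ₂ (.main i j) 3 = .tile t) ↔
      (P (.main (i + 1) j) ∧ t = toTau ts σ (i + 1) j) ∨
        (P (.main i (j + 1)) ∧ t = toTau ts σ i (j + 1)) := by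
  constructor
  · rintro ⟨σ₂, hP1, h3⟩
    rw [play_succ] at h3
    rcases play_main_one (ts := ts) (σ := σ) (σ₂ := σ₂) i j with h1 | h1 | h1 <;>
      rw [h1] at hP1 h3
    · exact .inl ⟨hP1, eq_toTau_of_play_two_eq_tile h3⟩
    · exact .inr ⟨hP1, eq_toTau_of_play_two_eq_tile h3⟩
    · exact absurd hP1 hP
  · rintro (⟨hP1, rfl⟩ | ⟨hP1, rfl⟩)
    · refine ⟨moveThenChoose i j 0, ?_, ?_⟩
      · simpa [play, run, SimpleGrid, sTrans, profile, moveThenChoose] using hP1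
      · simp [play, run, SimpleGrid, sTrans, profile, moveThenChoose, toTau]
    · refine ⟨moveThenChoose i j 1, ?_, ?_⟩
      · simpa [play, run, SimpleGrid, sTrans, profile, moveThenChoose] using hP1
      · simp [play, run, SimpleGrid, sTrans, profile, moveThenChoose, toTau]

theorem sLabel_tile_iff {x : SState} {t : ℕ} : sLabel x (8 + t) ↔ x = .tile t := by
  cases x <;> simp [sLabel] <;> omega

variable {π : ℕ → (SimpleGrid ts).State} {i j : ℕ}

theorem sat_D_two_X2_tile_iff (hπ : π 0 = .main i j) {t : ℕ} :
    sat (SimpleGrid ts) (D 2 (X2 (ptile t))) (ctx1 ts σ) π ↔ t = toTau ts σ i j := by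
  rw [sat_D_two_iff, hπ, ← exists_play_two_eq_tile_iff]
  exact exists_congr fun _ => sLabel_tile_iff

theorem sat_D_two_next_iff {a : ℕ} (ha : a = 2 ∨ a = 3) (hπ : π 0 = .main i j) {t : ℕ} :
    sat (SimpleGrid ts) (D 2 (next (conj (atom a) (X2 (ptile t))))) (ctx1 ts σ) π ↔
      (sLabel (.main (i + 1) j) a ∧ t = toTau ts σ (i + 1) j) ∨
        (sLabel (.main i (j + 1)) a ∧ t = toTau ts σ i (j + 1)) := by
  have hchoice : ¬ sLabel (.choice i j) a := by rcases ha with rfl | rfl <;> simp [sLabel]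
  rw [sat_D_two_iff, hπ, ← exists_play_three_eq_tile_iff (P := (sLabel · a)) hchoice]
  exact exists_congr fun _ => and_congr Iff.rfl sLabel_tile_iff

theorem sat_matchFormula_iff {R : List (ℕ × ℕ)} {a : ℕ} (ha : a = 2 ∨ a = 3)
    (hπ : π 0 = .main i j) :
    sat (SimpleGrid ts) (matchFormula R (atom a)) (ctx1 ts σ) π ↔
      (sLabel (.main (i + 1) j) a ∧ (toTau ts σ i j, toTau ts σ (i + 1) j) ∈ R) ∨
        (sLabel (.main i (j + 1)) a ∧ (toTau ts σ i j, toTau ts σ i (j + 1)) ∈ R) := by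
  simp only [matchFormula, sat_bigOr, List.mem_map, exists_exists_and_eq_and, sat_conj,
    sat_D_two_X2_tile_iff hπ, sat_D_two_next_iff ha hπ]
  constructor
  · rintro ⟨⟨t₁, t₂⟩, hR, rfl, (⟨hl, rfl⟩ | ⟨hl, rfl⟩)⟩
    exacts [.inl ⟨hl, hR⟩, .inr ⟨hl, hR⟩]
  · rintro (⟨hl, hR⟩ | ⟨hl, hR⟩)
    exacts [⟨_, hR, rfl, .inl ⟨hl, rfl⟩⟩, ⟨_, hR, rfl, .inr ⟨hl, rfl⟩⟩]

theorem sat_atom_iff {ctx : Ctx (SimpleGrid ts)} {p : ℕ} :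
    sat (SimpleGrid ts) (atom p) ctx π ↔ sLabel (π 0) p :=
  Iff.rfl

theorem exists_eq_main_of_sLabel {x : SState} {a : ℕ} (ha : a = 2 ∨ a = 3) (h : sLabel x a) :
    ∃ i j, x = .main i j := by
  cases x <;> simp [sLabel] at h ⊢ <;> omega

theorem sat_hvClauses_iff :
    sat (SimpleGrid ts) (hvClauses ts) (ctx1 ts σ) π ↔ ∀ i j, π 0 = .main i j →
      (toTau ts σ i j, toTau ts σ (i + 1) j) ∈ ts.H ∧
        (toTau ts σ i j, toTau ts σ i (j + 1)) ∈ ts.V := by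
  simp only [hvClauses, sat_bigAnd, List.forall_mem_cons, List.not_mem_nil, IsEmpty.forall_iff,
    implies_true, and_true, sat_fImp, pv1, pv2, sat_atom_iff]
  by_cases hmain : ∃ i j, π 0 = .main i j
  · obtain ⟨i, j, hπ⟩ := hmain
    have hcell : ∀ {P : ℕ → ℕ → Prop}, (∀ i' j', π 0 = .main i' j' → P i' j') ↔ P i j := by
      intro P
      rw [hπ]
      exact ⟨fun h => h i j rfl, fun h _ _ e => by cases e; exact h⟩
    refine Iff.trans ?_ hcell.symm
    simp only [sat_matchFormula_iff (.inl rfl) hπ, sat_matchFormula_iff (.inr rfl) hπ, hπ, sLabel]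
    rcases Nat.mod_two_eq_zero_or_one i with h | h <;> simp [h, Nat.add_mod]
  · have hv : ∀ a, a = 2 ∨ a = 3 → ¬ sLabel (π 0) a := fun a ha h =>
      hmain (exists_eq_main_of_sLabel ha h)
    simp only [hv 2 (.inl rfl), hv 3 (.inr rfl), IsEmpty.forall_iff, and_self, true_iff]
    exact fun i j h => absurd ⟨i, j, h⟩ hmain

end SimpleGrid

/-- **Theorem.** In the grid-shaped turn-based game structure over a tile system
`(T, H, V)`, the memoryless strategies of Player 1 are in one-to-one correspondence
with the assignments of a tile to each cell, i.e. with the maps `τ : ℕ×ℕ → T`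
(the correspondence `σ ↦ τ_σ` is onto the tile assignments, and two strategies
correspond to the same map iff they take the same transition at every choice state —
the only states where Player 1's move matters); moreover such a strategy makes the
horizontal-constraint formula
`⟨1⟩G[(v₁ ⇒ ⋁_{(t₁,t₂)∈H} ⟨2⟩XX t₁ ∧ ⟨2⟩X(v₂ ∧ XX t₂)) ∧ (v₂ ⇒ …)]`
together with its vertical counterpart hold iff the corresponding map `τ_σ` satisfies
`(τ(i,j), τ(i+1,j)) ∈ H` and `(τ(i,j), τ(i,j+1)) ∈ V` for all `i, j`. -/
theorem memoryless_strategies_correspond_to_tilings (ts : TileSystem) :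
    (∀ τ : ℕ → ℕ → ℕ, (∀ i j, τ i j < ts.numTiles) →
      ∃ σ : SState → ℕ, toTau ts σ = fun i j => τ i j) ∧
    (0 < ts.numTiles → ∀ σ : SState → ℕ, ∀ i j, toTau ts σ i j < ts.numTiles) ∧
    (∀ σ σ' : SState → ℕ, toTau ts σ = toTau ts σ' ↔
      ∀ i j : ℕ,
        (SimpleGrid ts).trans (SState.choice i j) (fun _ => σ (SState.choice i j))
          = (SimpleGrid ts).trans (SState.choice i j) (fun _ => σ' (SState.choice i j))) ∧
    (∀ σ : SState → ℕ,
      (∀ i j : ℕ, StateSatCtx (SimpleGrid ts) (ctx1 ts σ) (SState.main i j) (HVbody ts)) ↔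
      ((∀ i j, (toTau ts σ i j, toTau ts σ (i + 1) j) ∈ ts.H) ∧
       (∀ i j, (toTau ts σ i j, toTau ts σ i (j + 1)) ∈ ts.V))) := by
  refine ⟨fun _ => exists_toTau_eq, toTau_lt, fun _ _ => toTau_eq_toTau_iff, fun σ => ?_⟩
  simp only [StateSatCtx, HVbody_eq_glob_hvClauses, sat_glob, SimpleGrid.sat_hvClauses_iff]
  constructor
  · intro h
    have hHV (i j : ℕ) :=
      h i j _ (SimpleGrid.isOutcome_ctx1_play (σ₂ := fun _ => 0) _) 0 i j rfl
    exact ⟨fun i j => (hHV i j).1, fun i j => (hHV i j).2⟩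
  · rintro ⟨hH, hV⟩ - - - - - i j -
    exact ⟨hH i j, hV i j⟩
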